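/- Under the stated assumptions, the function v := m + Q satisfies the difference equation v(w) − v(w + 3πi) = G₂(w) and the automorphy relation v(−w + πi) = v(w) at every point where all the terms are defined; moreover (w − p₁)·v(w) tends to i as w → p₁ (w ≠ p₁) and (w − (−p₁ − πi))·v(w) tends to i as w → −p₁ − πi (w ≠ −p₁ − πi). (The function v̂₁¹ = m + Q is the h₁-automorphic solution of the difference equation for Φ = 3π/2 with residues i at p₁ and at −p₁ − πi.) -/

import Mathlib

/-!
For `m` the two functional equations come from `G₂` being `πi`-periodic with
`G₂(-w + πi) = -G₂(w)`: the prefactor `(π + 2iw)/(6π)` drops by exactly `1` under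
`w ↦ w + 3πi` and changes sign under `w ↦ -w + πi`. For `Q`, `coth` is odd and
`πi`-periodic, so every `coth((w - b)/3)` is `3πi`-periodic in `w`, and `w ↦ -w + πi`
permutes the six terms of `Q` up to sign.

Because `sinh p₁ = ik/ω`, the denominator `ω² sinh² w + k²` has a simple zero at `p₁`
with derivative `ω² sinh 2p₁`, so `m` has residue `i(π + 2ip₁)/(6π)` there; of the six
terms of `Q` only the first is singular at `p₁`, with residue `i - m₁`, and the two
residues add up to `i`. The point `-p₁ - πi` satisfies the same hypotheses as `p₁`, and `Q`
does not change when `p₁` is replaced by it, so the second residue is the first one taken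
at that point.
-/

open Complex Filter Topology

/-- The complex hyperbolic cotangent. -/
noncomputable def Complex.coth (z : ℂ) : ℂ := Complex.cosh z / Complex.sinh z

open scoped Real

section Residue

variable {𝕜 : Type*} [NontriviallyNormedField 𝕜]

theorem tendsto_sub_mul_div_of_hasDerivAt {f g : 𝕜 → 𝕜} {a f' : 𝕜} (hf : HasDerivAt f f' a)
    (hfa : f a = 0) (hf' : f' ≠ 0) (hg : ContinuousAt g a) :
    Tendsto (fun w => (w - a) * (g w / f w)) (𝓝[≠] a) (𝓝 (g a / f')) := by
  have hslope := (hasDerivAt_iff_tendsto_slope.1 hf).inv₀ hf'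
  rw [div_eq_mul_inv]
  refine ((hg.tendsto.mono_left nhdsWithin_le_nhds).mul hslope).congr fun w => ?_
  rw [slope_def_field, hfa, sub_zero, inv_div]
  ring

theorem tendsto_sub_mul_add_of_continuousAt {F R : 𝕜 → 𝕜} {a r : 𝕜}
    (hF : Tendsto (fun w => (w - a) * F w) (𝓝[≠] a) (𝓝 r)) (hR : ContinuousAt R a) :
    Tendsto (fun w => (w - a) * (F w + R w)) (𝓝[≠] a) (𝓝 r) := by
  have hR₀ : Tendsto (fun w => (w - a) * R w) (𝓝[≠] a) (𝓝 0) := by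
    have h : ContinuousAt (fun w => (w - a) * R w) a := by fun_prop
    simpa using h.tendsto.mono_left nhdsWithin_le_nhds
  simpa [mul_add] using hF.add hR₀

end Residue

namespace Complex

theorem sinh_ne_zero_of_re_ne_zero {z : ℂ} (hz : z.re ≠ 0) : sinh z ≠ 0 := by
  intro h
  obtain ⟨n, hn⟩ := sin_eq_zero_iff.1 (by rw [sin_mul_I, h, zero_mul] : sin (z * I) = 0)
  exact hz (by simpa using congrArg im hn)

theorem sinh_ofReal_mul_I_ne_zero {x : ℝ} (hx : Real.sin x ≠ 0) : sinh (x * I) ≠ 0 := by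
  rw [sinh_mul_I, ← ofReal_sin]
  exact mul_ne_zero (ofReal_ne_zero.2 hx) I_ne_zero

theorem coth_periodic : Function.Periodic coth (π * I) := by
  intro z
  simp only [coth, sinh_add_pi_mul_I, cosh_add_pi_mul_I, neg_div_neg_eq]

@[simp]
theorem coth_add_pi_mul_I (z : ℂ) : coth (z + π * I) = coth z :=
  coth_periodic z

@[simp]
theorem coth_sub_pi_mul_I (z : ℂ) : coth (z - π * I) = coth z :=
  coth_periodic.sub_eq z

@[simp]
theorem coth_neg (z : ℂ) : coth (-z) = -coth z := by
  simp only [coth, sinh_neg, cosh_neg, div_neg]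

theorem tendsto_sub_mul_coth_div {a c : ℂ} (hc : c ≠ 0) :
    Tendsto (fun w => (w - a) * coth ((w - a) / c)) (𝓝[≠] a) (𝓝 c) := by
  have hf : HasDerivAt (fun w => sinh ((w - a) / c)) (cosh ((a - a) / c) * (1 / c)) a :=
    (hasDerivAt_sinh _).comp a (((hasDerivAt_id a).sub_const a).div_const c)
  have := tendsto_sub_mul_div_of_hasDerivAt (g := fun w => cosh ((w - a) / c)) hf
    (by simp) (by simpa using hc) (by fun_prop)
  simpa [coth] using this

end Complex

namespace AutomorphicSolution

noncomputable def G₂ (ω : ℂ) (k : ℝ) (w : ℂ) : ℂ :=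
  I * ω ^ 2 * sinh (2 * w) / (ω ^ 2 * sinh w ^ 2 + (k : ℂ) ^ 2)

noncomputable def m (ω : ℂ) (k : ℝ) (w : ℂ) : ℂ :=
  ((π + 2 * I * w) / (6 * π)) * G₂ ω k w

noncomputable def m₁ (p : ℂ) : ℂ := -p / (3 * π) + I / 6

noncomputable def m₂ (p : ℂ) : ℂ := -p / (3 * π) - I / 6

noncomputable def m₃ (p : ℂ) : ℂ := -p / (3 * π) + I / 2

noncomputable def Q (p w : ℂ) : ℂ :=
  ((I - m₁ p) / 3) * coth ((w - p) / 3)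
    - (m₂ p / 3) * coth ((w - p - π * I) / 3)
    - (m₃ p / 3) * coth ((w - p + π * I) / 3)
    - ((I - m₁ p) / 3) * coth ((w + p - π * I) / 3)
    + (m₂ p / 3) * coth ((w + p) / 3)
    + (m₃ p / 3) * coth ((w + p + π * I) / 3)

variable {ω : ℂ} {k : ℝ}

theorem G₂_periodic : Function.Periodic (G₂ ω k) (π * I) := by
  intro w
  simp only [G₂, mul_add, sinh_add_pi_mul_I, neg_sq]
  rw [show 2 * (π * I) = (π * I : ℂ) + π * I by ring, ← add_assoc, sinh_add_pi_mul_I,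
    sinh_add_pi_mul_I, neg_neg]

theorem G₂_neg_add_pi_mul_I (w : ℂ) : G₂ ω k (-w + π * I) = -G₂ ω k w := by
  rw [G₂_periodic, G₂, G₂, mul_neg, sinh_neg, sinh_neg, neg_sq, mul_neg, neg_div]

theorem m_sub_m_add_three_pi_mul_I (w : ℂ) : m ω k w - m ω k (w + 3 * π * I) = G₂ ω k w := by
  have hG : G₂ ω k (w + 3 * π * I) = G₂ ω k w := by
    simpa [mul_assoc] using G₂_periodic.nat_mul 3 w
  rw [m, m, hG]
  field_simp
  linear_combination (-6 * (π : ℂ) * G₂ ω k w) * I_sq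

theorem m_neg_add_pi_mul_I (w : ℂ) : m ω k (-w + π * I) = m ω k w := by
  rw [m, m, G₂_neg_add_pi_mul_I]
  field_simp
  linear_combination (-2 * (π : ℂ) * G₂ ω k w) * I_sq

theorem Q_add_three_pi_mul_I (p w : ℂ) : Q p (w + 3 * π * I) = Q p w := by
  simp only [Q]
  rw [show (w + 3 * π * I - p) / 3 = (w - p) / 3 + π * I by ring,
    show (w + 3 * π * I - p - π * I) / 3 = (w - p - π * I) / 3 + π * I by ring,
    show (w + 3 * π * I - p + π * I) / 3 = (w - p + π * I) / 3 + π * I by ring,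
    show (w + 3 * π * I + p - π * I) / 3 = (w + p - π * I) / 3 + π * I by ring,
    show (w + 3 * π * I + p) / 3 = (w + p) / 3 + π * I by ring,
    show (w + 3 * π * I + p + π * I) / 3 = (w + p + π * I) / 3 + π * I by ring]
  simp only [coth_add_pi_mul_I]

theorem Q_neg_add_pi_mul_I (p w : ℂ) : Q p (-w + π * I) = Q p w := by
  simp only [Q]
  rw [show (-w + π * I - p) / 3 = -((w + p - π * I) / 3) by ring,
    show (-w + π * I - p - π * I) / 3 = -((w + p) / 3) by ring,
    show (-w + π * I - p + π * I) / 3 = -((w + p + π * I) / 3) + π * I by ring,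
    show (-w + π * I + p - π * I) / 3 = -((w - p) / 3) by ring,
    show (-w + π * I + p) / 3 = -((w - p - π * I) / 3) by ring,
    show (-w + π * I + p + π * I) / 3 = -((w - p + π * I) / 3) + π * I by ring]
  simp only [coth_add_pi_mul_I, coth_neg]
  ring

theorem Q_neg_sub_pi_mul_I (p : ℂ) : Q (-p - π * I) = Q p := by
  ext w
  simp only [Q]
  rw [show (w - (-p - π * I)) / 3 = (w + p + π * I) / 3 by ring,
    show (w - (-p - π * I) - π * I) / 3 = (w + p) / 3 by ring,
    show (w - (-p - π * I) + π * I) / 3 = (w + p - π * I) / 3 + π * I by ring,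
    show (w + (-p - π * I) - π * I) / 3 = (w - p + π * I) / 3 - π * I by ring,
    show (w + (-p - π * I)) / 3 = (w - p - π * I) / 3 by ring,
    show (w + (-p - π * I) + π * I) / 3 = (w - p) / 3 by ring]
  simp only [coth_add_pi_mul_I, coth_sub_pi_mul_I, m₁, m₂, m₃]
  field_simp
  ring

theorem tendsto_sub_mul_m {p : ℂ} (hp : sinh p = I * k / ω) (hs : sinh p ≠ 0)
    (hc : cosh p ≠ 0) :
    Tendsto (fun w => (w - p) * m ω k w) (𝓝[≠] p) (𝓝 (I * (π + 2 * I * p) / (6 * π))) := by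
  have hω : ω ≠ 0 := by
    -- otherwise `hp` reads `sinh p = I * k / 0 = 0`
    rintro rfl
    simp_all
  have hf : HasDerivAt (fun w => ω ^ 2 * sinh w ^ 2 + (k : ℂ) ^ 2)
      (ω ^ 2 * (2 * sinh p * cosh p)) p := by
    refine ((((hasDerivAt_sinh p).fun_pow 2).const_mul (ω ^ 2)).add_const _).congr_deriv ?_
    push_cast
    ring
  have hfp : ω ^ 2 * sinh p ^ 2 + (k : ℂ) ^ 2 = 0 := by
    rw [hp]
    field_simp
    linear_combination (k : ℂ) ^ 2 * I_sq
  have := tendsto_sub_mul_div_of_hasDerivAt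
    (g := fun w => (π + 2 * I * w) / (6 * π) * (I * ω ^ 2 * sinh (2 * w))) hf hfp
    (by simp [hω, hs, hc]) (by fun_prop)
  convert this using 2 with w
  · simp only [m, G₂, mul_div_assoc]
  · rw [sinh_two_mul]
    field_simp

theorem tendsto_sub_mul_Q {p : ℂ} (hre : p.re ≠ 0) :
    Tendsto (fun w => (w - p) * Q p w) (𝓝[≠] p) (𝓝 (I - m₁ p)) := by
  have hsing : Tendsto (fun w => (w - p) * ((I - m₁ p) / 3 * coth ((w - p) / 3)))
      (𝓝[≠] p) (𝓝 (I - m₁ p)) := by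
    convert ((tendsto_sub_mul_coth_div (a := p) three_ne_zero).const_mul ((I - m₁ p) / 3))
      using 2 <;> ring
  have hregular : ContinuousAt (fun w =>
      - (m₂ p / 3) * coth ((w - p - π * I) / 3) - (m₃ p / 3) * coth ((w - p + π * I) / 3)
      - ((I - m₁ p) / 3) * coth ((w + p - π * I) / 3) + (m₂ p / 3) * coth ((w + p) / 3)
      + (m₃ p / 3) * coth ((w + p + π * I) / 3)) p := by
    have h₁ : sinh ((p - p - π * I) / 3) ≠ 0 := by
      rw [show (p - p - π * I) / 3 = ((-(π / 3) : ℝ) : ℂ) * I by push_cast; ring]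
      exact sinh_ofReal_mul_I_ne_zero (by simp [Real.sin_pi_div_three])
    have h₂ : sinh ((p - p + π * I) / 3) ≠ 0 := by
      rw [show (p - p + π * I) / 3 = ((π / 3 : ℝ) : ℂ) * I by push_cast; ring]
      exact sinh_ofReal_mul_I_ne_zero (by simp [Real.sin_pi_div_three])
    have h₃ : sinh ((p + p - π * I) / 3) ≠ 0 := sinh_ne_zero_of_re_ne_zero (by simp [hre])
    have h₄ : sinh ((p + p) / 3) ≠ 0 := sinh_ne_zero_of_re_ne_zero (by simp [hre])
    have h₅ : sinh ((p + p + π * I) / 3) ≠ 0 := sinh_ne_zero_of_re_ne_zero (by simp [hre])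
    simp only [coth]
    fun_prop (disch := assumption)
  convert tendsto_sub_mul_add_of_continuousAt hsing hregular using 2 with w
  simp only [Q]
  ring

theorem tendsto_sub_mul_m_add_Q {p : ℂ} (hp : sinh p = I * k / ω) (hc : cosh p ≠ 0)
    (hre : p.re ≠ 0) :
    Tendsto (fun w => (w - p) * (m ω k w + Q p w)) (𝓝[≠] p) (𝓝 I) := by
  convert (tendsto_sub_mul_m hp (sinh_ne_zero_of_re_ne_zero hre) hc).add
    (tendsto_sub_mul_Q hre) using 2 with w
  · ring
  · have : (π : ℂ) ≠ 0 := ofReal_ne_zero.2 Real.pi_ne_zero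
    simp only [m₁]
    field_simp
    linear_combination (-6 * p) * I_sq

end AutomorphicSolution

theorem v_solves_difference_equation_with_correct_residues_general
    (ω : ℂ) (k : ℝ)
    (G₂ m : ℂ → ℂ)
    (hG₂ : ∀ w : ℂ, G₂ w = I * ω ^ 2 * Complex.sinh (2 * w) /
      (ω ^ 2 * (Complex.sinh w) ^ 2 + (k : ℂ) ^ 2))
    (hm : ∀ w : ℂ, m w = ((Real.pi + 2 * I * w) / (6 * Real.pi)) * G₂ w)
    (p₁ : ℂ) (hp : Complex.sinh p₁ = I * k / ω) (hc : Complex.cosh p₁ ≠ 0)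
    (hre : p₁.re ≠ 0)
    (m₁ m₂ m₃ : ℂ)
    (hm₁ : m₁ = -p₁ / (3 * Real.pi) + I / 6)
    (hm₂ : m₂ = -p₁ / (3 * Real.pi) - I / 6)
    (hm₃ : m₃ = -p₁ / (3 * Real.pi) + I / 2)
    (Q : ℂ → ℂ)
    (hQ : ∀ w : ℂ, Q w =
      ((I - m₁) / 3) * Complex.coth ((w - p₁) / 3)
      - (m₂ / 3) * Complex.coth ((w - p₁ - Real.pi * I) / 3)
      - (m₃ / 3) * Complex.coth ((w - p₁ + Real.pi * I) / 3)
      - ((I - m₁) / 3) * Complex.coth ((w + p₁ - Real.pi * I) / 3)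
      + (m₂ / 3) * Complex.coth ((w + p₁) / 3)
      + (m₃ / 3) * Complex.coth ((w + p₁ + Real.pi * I) / 3)) :
    (∀ w : ℂ,
      ω ^ 2 * (Complex.sinh w) ^ 2 + (k : ℂ) ^ 2 ≠ 0 →
      Complex.sinh ((w - p₁) / 3) ≠ 0 →
      Complex.sinh ((w - p₁ - Real.pi * I) / 3) ≠ 0 →
      Complex.sinh ((w - p₁ + Real.pi * I) / 3) ≠ 0 →
      Complex.sinh ((w + p₁ - Real.pi * I) / 3) ≠ 0 →
      Complex.sinh ((w + p₁) / 3) ≠ 0 →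
      Complex.sinh ((w + p₁ + Real.pi * I) / 3) ≠ 0 →
      (m w + Q w) - (m (w + 3 * Real.pi * I) + Q (w + 3 * Real.pi * I)) = G₂ w ∧
      m (-w + Real.pi * I) + Q (-w + Real.pi * I) = m w + Q w) ∧
    Tendsto (fun w => (w - p₁) * (m w + Q w)) (𝓝[≠] p₁) (𝓝 I) ∧
    Tendsto (fun w => (w - (-p₁ - Real.pi * I)) * (m w + Q w))
      (𝓝[≠] (-p₁ - Real.pi * I)) (𝓝 I) := by
  obtain rfl : G₂ = AutomorphicSolution.G₂ ω k := funext hG₂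
  obtain rfl : m = AutomorphicSolution.m ω k := funext hm
  subst hm₁ hm₂ hm₃
  obtain rfl : Q = AutomorphicSolution.Q p₁ := funext hQ
  refine ⟨fun w _ _ _ _ _ _ _ => ⟨?_, ?_⟩,
    AutomorphicSolution.tendsto_sub_mul_m_add_Q hp hc hre, ?_⟩
  · rw [AutomorphicSolution.Q_add_three_pi_mul_I,
      ← AutomorphicSolution.m_sub_m_add_three_pi_mul_I]
    ring
  · rw [AutomorphicSolution.m_neg_add_pi_mul_I, AutomorphicSolution.Q_neg_add_pi_mul_I]
  · rw [← AutomorphicSolution.Q_neg_sub_pi_mul_I]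
    refine AutomorphicSolution.tendsto_sub_mul_m_add_Q ?_ ?_ (by simpa using hre)
    · rw [sub_eq_add_neg, ← neg_add, sinh_neg, sinh_add_pi_mul_I, neg_neg, hp]
    · rwa [sub_eq_add_neg, ← neg_add, cosh_neg, cosh_add_pi_mul_I, neg_ne_zero]

theorem v_solves_difference_equation_with_correct_residues
    (ω : ℂ) (hω : 0 < ω.im) (k : ℝ) (hk : 0 < k)
    (G₂ m : ℂ → ℂ)
    (hG₂ : ∀ w : ℂ, G₂ w = I * ω ^ 2 * Complex.sinh (2 * w) /
      (ω ^ 2 * (Complex.sinh w) ^ 2 + (k : ℂ) ^ 2))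
    (hm : ∀ w : ℂ, m w = ((Real.pi + 2 * I * w) / (6 * Real.pi)) * G₂ w)
    (p₁ : ℂ) (hp : Complex.sinh p₁ = I * k / ω) (hc : Complex.cosh p₁ ≠ 0)
    (hre : p₁.re ≠ 0)
    (m₁ m₂ m₃ : ℂ)
    (hm₁ : m₁ = -p₁ / (3 * Real.pi) + I / 6)
    (hm₂ : m₂ = -p₁ / (3 * Real.pi) - I / 6)
    (hm₃ : m₃ = -p₁ / (3 * Real.pi) + I / 2)
    (Q : ℂ → ℂ)
    (hQ : ∀ w : ℂ, Q w =
      ((I - m₁) / 3) * Complex.coth ((w - p₁) / 3)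
      - (m₂ / 3) * Complex.coth ((w - p₁ - Real.pi * I) / 3)
      - (m₃ / 3) * Complex.coth ((w - p₁ + Real.pi * I) / 3)
      - ((I - m₁) / 3) * Complex.coth ((w + p₁ - Real.pi * I) / 3)
      + (m₂ / 3) * Complex.coth ((w + p₁) / 3)
      + (m₃ / 3) * Complex.coth ((w + p₁ + Real.pi * I) / 3)) :
    (∀ w : ℂ,
      ω ^ 2 * (Complex.sinh w) ^ 2 + (k : ℂ) ^ 2 ≠ 0 →
      Complex.sinh ((w - p₁) / 3) ≠ 0 →
      Complex.sinh ((w - p₁ - Real.pi * I) / 3) ≠ 0 →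
      Complex.sinh ((w - p₁ + Real.pi * I) / 3) ≠ 0 →
      Complex.sinh ((w + p₁ - Real.pi * I) / 3) ≠ 0 →
      Complex.sinh ((w + p₁) / 3) ≠ 0 →
      Complex.sinh ((w + p₁ + Real.pi * I) / 3) ≠ 0 →
      (m w + Q w) - (m (w + 3 * Real.pi * I) + Q (w + 3 * Real.pi * I)) = G₂ w ∧
      m (-w + Real.pi * I) + Q (-w + Real.pi * I) = m w + Q w) ∧
    Tendsto (fun w => (w - p₁) * (m w + Q w)) (𝓝[≠] p₁) (𝓝 I) ∧
    Tendsto (fun w => (w - (-p₁ - Real.pi * I)) * (m w + Q w))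
      (𝓝[≠] (-p₁ - Real.pi * I)) (𝓝 I) :=
  v_solves_difference_equation_with_correct_residues_general ω k G₂ m hG₂ hm p₁ hp hc hre m₁ m₂ m₃
    hm₁ hm₂ hm₃ Q hQ
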